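/- Let ℋ = {(x_1, x_2) ∈ ℝ² : x_1(x_1² - x_2²) = 1, x_1 > 0} with h(x) = x_1³ - x_1x_2². On the portion of ℋ parametrized by x_1 > 1 with x_2 = √(x_1² - 1/x_1), the pullback of -∂²h equals g_ℋ = (6/x_1²)·((1 - 1/(4x_1³))/(1 - 1/x_1³)) dx_1². In particular, g_ℋ is positive definite there and the arc-length satisfies s ~ √6 log(x_1) as x_1 → ∞, i.e., the ratio of the arc length from 1+ε to x_1 and √6 log x_1 tends to 1. -/

import Mathlib

/-! Differentiating `x₂² = x₁² - 1/x₁` and substituting gives the closed form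
`g = (6/x²)(1 + 3/(4(x³ - 1)))` for `x > 1`. Hence `√6/x ≤ √g ≤ √6/x + C/x²` on every `[a, ∞)`
with `a > 1`, so the arc length from `a` to `x` is `√6 log x + O(1)`. -/

open Filter

noncomputable section

/-- the second coordinate `x₂ = √(x₁² - 1/x₁)` on the inhomogeneous complete
PSR curve `ℋ = {x₁(x₁² - x₂²) = 1, x₁ > 0}`. -/
def x₂fun : ℝ → ℝ := fun x => Real.sqrt (x^2 - 1/x)

/-- the pullback of `-∂²h`, `h = x₁³ - x₁x₂²`, along the parametrization
`x₁ ↦ (x₁, x₂(x₁))` (Hessian entries: `h₁₁ = 6x₁`, `h₁₂ = -2x₂`,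
`h₂₂ = -2x₁`). -/
def gH : ℝ → ℝ := fun x =>
  -(6 * x + 2 * (-2 * x₂fun x) * deriv x₂fun x
    + (-2 * x) * (deriv x₂fun x)^2)

open Topology Set intervalIntegral MeasureTheory

theorem integral_div_add_div_sq {a x : ℝ} (ha : 0 < a) (hax : a ≤ x) (c C : ℝ) :
    ∫ u in a..x, (c / u + C / u ^ 2) = c * (Real.log x - Real.log a) + C * (1 / a - 1 / x) := by
  have hpos : ∀ u ∈ uIcc a x, 0 < u := fun u hu => ha.trans_le (by
    rw [uIcc_of_le hax] at hu; exact hu.1)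
  rw [integral_eq_sub_of_hasDerivAt (f := fun u => c * Real.log u - C * u⁻¹)]
  · simp only [one_div]; ring
  · intro u hu
    have hu0 := (hpos u hu).ne'
    refine (((Real.hasDerivAt_log hu0).const_mul c).sub
      ((hasDerivAt_inv hu0).const_mul C)).congr_deriv ?_
    field_simp
    ring
  · exact ContinuousOn.intervalIntegrable (by
      fun_prop (disch := intro u hu; have := hpos u hu; positivity))

theorem tendsto_integral_div_mul_log_of_le_of_le {f : ℝ → ℝ} {a c C : ℝ} (ha : 0 < a)
    (hc : 0 < c) (hf : ContinuousOn f (Ici a)) (hlow : ∀ u, a ≤ u → c / u ≤ f u)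
    (hup : ∀ u, a ≤ u → f u ≤ c / u + C / u ^ 2) :
    Tendsto (fun x => (∫ u in a..x, f u) / (c * Real.log x)) atTop (𝓝 1) := by
  have hbounds : ∀ x, a ≤ x → c * (Real.log x - Real.log a) ≤ ∫ u in a..x, f u ∧
      ∫ u in a..x, f u ≤ c * (Real.log x - Real.log a) + C * (1 / a - 1 / x) := by
    intro x hax
    have hfi : IntervalIntegrable f volume a x :=
      (hf.mono (by rw [uIcc_of_le hax]; exact Icc_subset_Ici_self)).intervalIntegrable
    have hpos : ∀ u ∈ uIcc a x, 0 < u := fun u hu => ha.trans_le (by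
      rw [uIcc_of_le hax] at hu; exact hu.1)
    have hgi : ∀ C' : ℝ, IntervalIntegrable (fun u => c / u + C' / u ^ 2) volume a x :=
      fun C' => ContinuousOn.intervalIntegrable (by
        fun_prop (disch := intro u hu; have := hpos u hu; positivity))
    constructor
    · have h := integral_div_add_div_sq ha hax c 0
      simp only [zero_div, add_zero, zero_mul] at h
      rw [← h]
      exact integral_mono_on hax (by simpa using hgi 0) hfi fun u hu => hlow u hu.1
    · rw [← integral_div_add_div_sq ha hax]
      exact integral_mono_on hax hfi (hgi C) fun u hu => hup u hu.1
  have hlog : Tendsto Real.log atTop atTop := Real.tendsto_log_atTop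
  have hlower : Tendsto (fun x => 1 - Real.log a / Real.log x) atTop (𝓝 1) := by
    simpa using tendsto_const_nhds.sub (tendsto_const_nhds.div_atTop hlog)
  have hupper : Tendsto (fun x => 1 - Real.log a / Real.log x
      + C * (1 / a - 1 / x) / (c * Real.log x)) atTop (𝓝 1) := by
    have hnum : Tendsto (fun x : ℝ => C * (1 / a - x⁻¹)) atTop (𝓝 (C * (1 / a - 0))) :=
      (tendsto_const_nhds.sub tendsto_inv_atTop_zero).const_mul C
    simpa using hlower.add (hnum.div_atTop (hlog.const_mul_atTop hc))
  refine tendsto_of_tendsto_of_tendsto_of_le_of_le' hlower hupper ?_ ?_ <;>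
  filter_upwards [eventually_ge_atTop a, eventually_gt_atTop 1] with x hax hx1 <;>
  have hlx : 0 < Real.log x := Real.log_pos hx1
  · rw [le_div_iff₀ (mul_pos hc hlx)]
    calc (1 - Real.log a / Real.log x) * (c * Real.log x)
        = c * (Real.log x - Real.log a) := by field_simp
      _ ≤ _ := (hbounds x hax).1
  · rw [div_le_iff₀ (mul_pos hc hlx)]
    calc ∫ u in a..x, f u
        ≤ c * (Real.log x - Real.log a) + C * (1 / a - 1 / x) := (hbounds x hax).2
      _ = _ := by field_simp

theorem hasDerivAt_x₂fun {x : ℝ} (hx : 0 < x ^ 2 - 1 / x) :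
    HasDerivAt x₂fun ((2 * x + 1 / x ^ 2) / (2 * x₂fun x)) x := by
  have hx0 : x ≠ 0 := by rintro rfl; simp at hx
  have hq : HasDerivAt (fun y : ℝ => y ^ 2 - 1 / y) (2 * x + 1 / x ^ 2) x := by
    simp only [one_div]
    exact ((hasDerivAt_pow 2 x).sub (hasDerivAt_inv hx0)).congr_deriv (by norm_num)
  exact hq.sqrt hx.ne'

theorem gH_eq_of_pos {x : ℝ} (hx : 0 < x ^ 2 - 1 / x) :
    gH x = 6 / x ^ 2 * (1 + 3 / (4 * (x ^ 3 - 1))) := by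
  have hx0 : x ≠ 0 := by rintro rfl; simp at hx
  have hx3 : x ^ 3 - 1 ≠ 0 := by
    have : x ^ 2 - 1 / x = (x ^ 3 - 1) / x := by field_simp
    rw [this] at hx
    exact fun h => by simp [h] at hx
  have hs : 0 < x₂fun x := Real.sqrt_pos.mpr hx
  have hs2 : x₂fun x ^ 2 = x ^ 2 - 1 / x := Real.sq_sqrt hx.le
  simp only [gH, (hasDerivAt_x₂fun hx).deriv]
  field_simp
  rw [hs2]
  field_simp
  ring

theorem sq_sub_inv_pos_of_one_lt {x : ℝ} (hx : 1 < x) : 0 < x ^ 2 - 1 / x := by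
  have : 1 / x < 1 := (div_lt_one (by linarith)).mpr hx
  nlinarith

theorem six_div_sq_le_gH {u : ℝ} (hu : 1 < u) : 6 / u ^ 2 ≤ gH u := by
  rw [gH_eq_of_pos (sq_sub_inv_pos_of_one_lt hu)]
  have : 0 < u ^ 3 - 1 := by nlinarith [one_lt_pow₀ hu three_ne_zero]
  exact le_mul_of_one_le_right (by positivity) (le_add_of_nonneg_right (by positivity))

theorem sqrt_six_div_le_sqrt_gH {u : ℝ} (hu : 1 < u) : √6 / u ≤ √(gH u) := by
  have hu0 : 0 < u := by linarith
  rw [Real.le_sqrt (by positivity) ((by positivity : (0 : ℝ) ≤ 6 / u ^ 2).trans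
    (six_div_sq_le_gH hu)), div_pow, Real.sq_sqrt (by norm_num)]
  exact six_div_sq_le_gH hu

theorem sqrt_gH_le {a u : ℝ} (ha : 1 < a) (hau : a ≤ u) :
    √(gH u) ≤ √6 / u + 3 * √6 / (8 * (a ^ 2 - 1 / a)) / u ^ 2 := by
  have hu0 : 0 < u := by linarith
  have hm := sq_sub_inv_pos_of_one_lt ha
  set m := a ^ 2 - 1 / a
  -- `u ↦ u² - 1/u` is increasing, so `u³ - 1 ≥ m u` on `[a, ∞)`.
  have hcube : m * u ≤ u ^ 3 - 1 := by
    have h1 : 1 / u ≤ 1 / a := one_div_le_one_div_of_le (by linarith) hau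
    have h2 : a ^ 2 ≤ u ^ 2 := pow_le_pow_left₀ (by linarith) hau 2
    have : m ≤ u ^ 2 - 1 / u := by simp only [m]; linarith
    calc m * u ≤ (u ^ 2 - 1 / u) * u := mul_le_mul_of_nonneg_right this hu0.le
      _ = u ^ 3 - 1 := by field_simp
  have hs6 : √6 ^ 2 = 6 := Real.sq_sqrt (by norm_num)
  rw [Real.sqrt_le_left (by positivity), gH_eq_of_pos (sq_sub_inv_pos_of_one_lt (ha.trans_le hau))]
  calc 6 / u ^ 2 * (1 + 3 / (4 * (u ^ 3 - 1)))
      ≤ 6 / u ^ 2 * (1 + 3 / (4 * (m * u))) := by gcongr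
    _ ≤ 6 / u ^ 2 * (1 + 3 / (4 * (m * u))) + 6 / u ^ 2 * (3 / (8 * m * u)) ^ 2 := by
      simp only [le_add_iff_nonneg_right]; positivity
    _ = (√6 / u + 3 * √6 / (8 * m) / u ^ 2) ^ 2 := by field_simp; rw [hs6]; ring

theorem continuousOn_sqrt_gH : ContinuousOn (fun u => √(gH u)) (Ioi 1) := by
  have hform : ContinuousOn (fun u : ℝ => 6 / u ^ 2 * (1 + 3 / (4 * (u ^ 3 - 1)))) (Ioi 1) := by
    refine continuousOn_of_forall_continuousAt fun u hu => ?_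
    have : 0 < u := by linarith [mem_Ioi.mp hu]
    have : 0 < u ^ 3 - 1 := by linarith [one_lt_pow₀ (mem_Ioi.mp hu) three_ne_zero]
    fun_prop (disch := positivity)
  exact (hform.congr fun u hu => gH_eq_of_pos (sq_sub_inv_pos_of_one_lt hu)).sqrt

/-- on the inhomogeneous complete PSR curve the induced metric is
`(6/x₁²)·((1 - 1/(4x₁³))/(1 - 1/x₁³)) dx₁²`, positive definite for `x₁ > 1`,
and the arc length from `1+ε` is asymptotic to `√6 log x₁` as `x₁ → ∞`. -/
theorem stmt_14 :
    (∀ x : ℝ, 1 < x →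
      gH x = 6 / x^2 * ((1 - 1/(4*x^3)) / (1 - 1/x^3)) ∧ 0 < gH x) ∧
    (∀ ε : ℝ, 0 < ε →
      Tendsto
        (fun x : ℝ =>
          (∫ u in (1+ε)..x, Real.sqrt (gH u)) / (Real.sqrt 6 * Real.log x))
        atTop (nhds 1)) := by
  refine ⟨fun x hx => ⟨?_, ?_⟩, fun ε hε => ?_⟩
  · have : 0 < x ^ 3 - 1 := by linarith [one_lt_pow₀ hx three_ne_zero]
    rw [gH_eq_of_pos (sq_sub_inv_pos_of_one_lt hx)]
    field_simp
    ring
  · exact (by positivity : (0 : ℝ) < 6 / x ^ 2).trans_le (six_div_sq_le_gH hx)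
  · have ha : 1 < 1 + ε := by linarith
    exact tendsto_integral_div_mul_log_of_le_of_le (by linarith) (by positivity)
      (continuousOn_sqrt_gH.mono (Ici_subset_Ioi.mpr ha))
      (fun u hu => sqrt_six_div_le_sqrt_gH (ha.trans_le hu)) (fun u hu => sqrt_gH_le ha hu)

end
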